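/- arXiv:1009.1900 — 8 statements merged into one kernel-verified Lean document; each statement's English description precedes it below -/
import Mathlib

section
/- Let 𝒜 be an additive category and A a subring of ℚ. Then the class Σ_A(𝒜) of all A-isogenies of 𝒜 is a multiplicative system of morphisms (it contains all identities and is closed under composition) which admits both a calculus of left fractions and a calculus of right fractions. -/
open CategoryTheory Limits

/-- A morphism `f : X ⟶ Y` is an `A`-isogeny if there are `g : Y ⟶ X` and a nonzero
integer `n`, invertible in `A`, with `f ≫ g = n • 𝟙 X` and `g ≫ f = n • 𝟙 Y`. -/
def aIsogenies (A : Subring ℚ) (C : Type*) [Category C] [Preadditive C] :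
    MorphismProperty C :=
  fun X Y f => ∃ (g : Y ⟶ X) (n : ℤ), n ≠ 0 ∧ IsUnit (n : A) ∧
    f ≫ g = (n : ℤ) • 𝟙 X ∧ g ≫ f = (n : ℤ) • 𝟙 Y

lemma aIsogenies_smul_id (A : Subring ℚ) (C : Type*) [Category C] [Preadditive C]
    (X : C) (n : ℤ) (hn : n ≠ 0) (hu : IsUnit (n : A)) :
    aIsogenies A C ((n : ℤ) • 𝟙 X) :=
  ⟨𝟙 X, n, hn, hu, by simp, by simp⟩

lemma aIsogenies_mult (A : Subring ℚ) (C : Type*) [Category C] [Preadditive C] :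
    (aIsogenies A C).IsMultiplicative := by
  refine { id_mem := fun X => ⟨𝟙 X, 1, one_ne_zero, by simp, by simp, by simp⟩,
           comp_mem := ?_ }
  rintro X Y Z f f' ⟨g, n, hn, hu, h1, h2⟩ ⟨g', n', hn', hu', h1', h2'⟩
  refine ⟨g' ≫ g, n * n', mul_ne_zero hn hn', by push_cast; exact hu.mul hu', ?_, ?_⟩
  · rw [Category.assoc, ← Category.assoc f', h1', Preadditive.zsmul_comp,
      Category.id_comp, Preadditive.comp_zsmul, h1, smul_smul, mul_comm]
  · rw [Category.assoc, ← Category.assoc g f f', h2,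
      Preadditive.zsmul_comp, Category.id_comp, Preadditive.comp_zsmul, h2',
      smul_smul, mul_comm]

/-- Proposition B.1.3 c): the `A`-isogenies of an additive category form a multiplicative
system admitting both a calculus of left fractions and a calculus of right fractions. -/
theorem stmt_1 (A : Subring ℚ) (C : Type*) [Category C] [Preadditive C]
    [HasFiniteBiproducts C] :
    (aIsogenies A C).IsMultiplicative ∧
    (aIsogenies A C).HasLeftCalculusOfFractions ∧
    (aIsogenies A C).HasRightCalculusOfFractions := by
  have hm := aIsogenies_mult A C
  refine ⟨hm, ⟨?_, ?_⟩, ⟨?_, ?_⟩⟩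
  · rintro X Y ⟨s, ⟨g, n, hn, hu, h1, h2⟩, f⟩
    refine ⟨⟨g ≫ f, (n : ℤ) • 𝟙 Y, aIsogenies_smul_id A C Y n hn hu⟩, ?_⟩
    dsimp
    rw [← Category.assoc, h1, Preadditive.comp_zsmul, Preadditive.zsmul_comp,
      Category.comp_id, Category.id_comp]
  · rintro X' X Y f₁ f₂ s ⟨g, n, hn, hu, h1, h2⟩ heq
    refine ⟨Y, (n : ℤ) • 𝟙 Y, aIsogenies_smul_id A C Y n hn hu, ?_⟩
    have : (g ≫ s) ≫ f₁ = (g ≫ s) ≫ f₂ := by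
      rw [Category.assoc, Category.assoc, heq]
    rw [h2] at this
    simpa [Preadditive.comp_zsmul, Preadditive.zsmul_comp] using this
  · rintro X Y ⟨f, s, ⟨g, n, hn, hu, h1, h2⟩⟩
    refine ⟨⟨(n : ℤ) • 𝟙 X, aIsogenies_smul_id A C X n hn hu, f ≫ g⟩, ?_⟩
    dsimp
    rw [Category.assoc, h2, Preadditive.zsmul_comp, Category.id_comp,
      Preadditive.comp_zsmul, Category.comp_id]
  · rintro X Y Y' f₁ f₂ s ⟨g, n, hn, hu, h1, h2⟩ heq
    refine ⟨X, (n : ℤ) • 𝟙 X, aIsogenies_smul_id A C X n hn hu, ?_⟩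
    have : f₁ ≫ s ≫ g = f₂ ≫ s ≫ g := by
      rw [← Category.assoc, heq, Category.assoc]
    rw [h1] at this
    simpa [Preadditive.comp_zsmul, Preadditive.zsmul_comp] using this
end

section
/- Let 𝒜 be an abelian category with short exact sequences S : 0 → A' → A → A'' → 0 and T : 0 → B' → B → B'' → 0, with extension classes [S] ∈ Ext¹_𝒜(A'', A') and [T] ∈ Ext¹_𝒜(B'', B'), and let f' : A' → B' and f'' : A'' → B'' be morphisms. Then a glueing f : A → B of (f', f'') exists if and only if f'_*[S] = (f'')^*[T] in Ext¹_𝒜(A'', B'), where f'_* denotes pushforward (composition with the degree-0 class of f') and (f'')^* denotes pullback (precomposition with the degree-0 class of f''). -/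
/-!
If `f` is a glueing, `(f', f, f'')` is a morphism of short exact sequences and the equality is
the naturality of the extension class. Conversely, the equality kills the obstruction
`(S.g ≫ f'')^*[T] = S.g^*[S] · f' = 0` to lifting `S.g ≫ f''` along `T.g`, giving `g : A ⟶ B`.
Then `g` restricts to some `k : A' ⟶ B'`, naturality gives `[S] · k = (f'')^*[T] = [S] · f'`,
so `k - f'` extends along `S.f` to some `e : A ⟶ B'`, and `g - e ≫ T.f` is a glueing.
-/

open CategoryTheory Limits Abelian

universe w v u

namespace CategoryTheory.ShortComplex.ShortExact

variable {C : Type u} [Category.{v} C] [Abelian C] [HasExt.{w} C] {S : ShortComplex C}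
  (hS : S.ShortExact)

include hS in
lemma exists_lift_of_mk₀_comp_extClass_eq_zero {X : C} (φ : X ⟶ S.X₃)
    (hφ : (Ext.mk₀ φ).comp hS.extClass (zero_add 1) = 0) :
    ∃ g : X ⟶ S.X₂, g ≫ S.g = φ := by
  obtain ⟨x, hx⟩ := Ext.covariant_sequence_exact₃ X hS (Ext.mk₀ φ) (zero_add 1) hφ
  obtain ⟨g, rfl⟩ := (Ext.mk₀_bijective _ _).2 x
  exact ⟨g, (Ext.mk₀_bijective _ _).1 (by rwa [Ext.mk₀_comp_mk₀] at hx)⟩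

include hS in
lemma exists_extension_of_extClass_comp_mk₀_eq_zero {Y : C} (ψ : S.X₁ ⟶ Y)
    (hψ : hS.extClass.comp (Ext.mk₀ ψ) (add_zero 1) = 0) :
    ∃ e : S.X₂ ⟶ Y, S.f ≫ e = ψ := by
  obtain ⟨x, hx⟩ := Ext.contravariant_sequence_exact₁ hS Y (Ext.mk₀ ψ) (add_zero 1) hψ
  obtain ⟨e, rfl⟩ := (Ext.mk₀_bijective _ _).2 x
  exact ⟨e, (Ext.mk₀_bijective _ _).1 (by rwa [Ext.mk₀_comp_mk₀] at hx)⟩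

end CategoryTheory.ShortComplex.ShortExact

/-- Lemma D.1.1 (1): given short exact sequences `S` and `T` and morphisms `f'`, `f''` on
the outer terms, a glueing `f` exists iff the pushforward of the extension class of `S`
along `f'` equals the pullback of the extension class of `T` along `f''` in `Ext¹`. -/
theorem stmt_8 {C : Type u} [Category.{v} C] [Abelian C] [HasExt.{w} C]
    (S T : ShortComplex C) (hS : S.ShortExact) (hT : T.ShortExact)
    (f' : S.X₁ ⟶ T.X₁) (f'' : S.X₃ ⟶ T.X₃) :
    (∃ f : S.X₂ ⟶ T.X₂, S.f ≫ f = f' ≫ T.f ∧ f ≫ T.g = S.g ≫ f'') ↔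
      hS.extClass.comp (Ext.mk₀ f') (add_zero 1) =
        (Ext.mk₀ f'').comp hT.extClass (zero_add 1) := by
  refine ⟨fun ⟨f, h₁, h₂⟩ => hS.extClass_naturality hT ⟨f', f, f'', h₁.symm, h₂⟩, fun h => ?_⟩
  obtain ⟨g, hg⟩ := hT.exists_lift_of_mk₀_comp_extClass_eq_zero (S.g ≫ f'') (by
    rw [← Ext.mk₀_comp_mk₀, Ext.comp_assoc_of_second_deg_zero, ← h]
    exact hS.comp_extClass_assoc _ _)
  have := hT.mono_f
  have hk : (S.f ≫ g) ≫ T.g = 0 := by simp [hg]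
  obtain ⟨k, hkf⟩ : ∃ k, k ≫ T.f = S.f ≫ g := ⟨_, hT.exact.lift_f _ hk⟩
  have hS_k : hS.extClass.comp (Ext.mk₀ k) (add_zero 1) =
      hS.extClass.comp (Ext.mk₀ f') (add_zero 1) :=
    (hS.extClass_naturality hT ⟨k, g, f'', hkf, hg⟩).trans h.symm
  obtain ⟨e, he⟩ := hS.exists_extension_of_extClass_comp_mk₀_eq_zero (k - f') (by
    rw [sub_eq_add_neg, Ext.mk₀_add, Ext.comp_add, Ext.mk₀_neg, Ext.comp_neg, hS_k,
      add_neg_cancel])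
  refine ⟨g - e ≫ T.f, ?_, ?_⟩
  · rw [Preadditive.comp_sub, ← hkf, reassoc_of% he, Preadditive.sub_comp, sub_sub_cancel]
  · simp [hg]
end

section
/- Let 𝒜' and 𝒜 be abelian categories and i : 𝒜' → 𝒜 a fully faithful exact functor whose essential image is a Serre subcategory of 𝒜. Let A ∈ 𝒜 and suppose the right adjoint of i is defined at A, i.e. the functor X ↦ Hom_𝒜(iX, A) on 𝒜'^op is representable by an object pA, with counit morphism ε_A : i(pA) → A corresponding to the identity of pA. Then: (1) ε_A is a monomorphism; (2) pA ≅ 0 if and only if Hom_𝒜(iX, A) = 0 for every object X of 𝒜'. -/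
open CategoryTheory Limits

/-- Lemma D.1.7 (1), (2): if `i : 𝒜' ⥤ 𝒜` is a fully faithful exact functor between abelian
categories whose essential image is a Serre subcategory, `A ∈ 𝒜`, and the right adjoint of
`i` is defined at `A` with value `P` and counit `ε : i P ⟶ A`, then `ε` is a monomorphism,
and `P` is zero iff `Hom(i X, A) = 0` for all `X`. -/
theorem stmt_9 {A' : Type*} {A : Type*} [Category A'] [Category A]
    [Abelian A'] [Abelian A]
    (i : A' ⥤ A) [i.Full] [i.Faithful]
    [PreservesFiniteLimits i] [PreservesFiniteColimits i]
    (hSerre : ∀ (S : ShortComplex A), S.ShortExact →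
        (i.essImage S.X₂ ↔ (i.essImage S.X₁ ∧ i.essImage S.X₃)))
    (X : A) (P : A') (ε : i.obj P ⟶ X)
    (huniv : ∀ (Y : A') (g : i.obj Y ⟶ X), ∃! u : Y ⟶ P, i.map u ≫ ε = g) :
    Mono ε ∧ (IsZero P ↔ ∀ (Y : A') (g : i.obj Y ⟶ X), g = 0) := by
  have hmono : Mono ε := by
    let S : ShortComplex A :=
      ShortComplex.mk (kernel.ι ε) (cokernel.π (kernel.ι ε)) (by simp)
    have hS : S.ShortExact :=
      { exact := S.exact_of_g_is_cokernel (cokernelIsCokernel _) }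
    have h2 : i.essImage S.X₂ := ⟨P, ⟨Iso.refl _⟩⟩
    obtain ⟨K, ⟨e⟩⟩ := ((hSerre S hS).mp h2).1
    obtain ⟨k, hk⟩ := i.map_surjective (e.hom ≫ kernel.ι ε)
    have hk0 : k = 0 := by
      obtain ⟨u, hu, huniq⟩ := huniv K 0
      rw [huniq k (by show i.map k ≫ ε = 0; rw [hk]; simp),
        huniq 0 (by show i.map 0 ≫ ε = 0; simp)]
    have hker : kernel.ι ε = 0 := by
      rw [hk0, i.map_zero] at hk
      rw [← Iso.inv_hom_id_assoc e (kernel.ι ε), ← hk, comp_zero]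
    exact Abelian.mono_of_kernel_ι_eq_zero _ hker
  refine ⟨hmono, ?_, ?_⟩
  · intro hP Y g
    obtain ⟨u, hu, -⟩ := huniv Y g
    rw [← hu, hP.eq_of_tgt u 0, i.map_zero, zero_comp]
  · intro h
    have hε : ε = 0 := h P ε
    have : IsZero (i.obj P) := IsZero.of_mono_eq_zero ε hε
    rw [IsZero.iff_id_eq_zero]
    apply i.map_injective
    rw [i.map_id, i.map_zero, ← IsZero.iff_id_eq_zero]
    exact this
end

section
/- Let 𝒜' and 𝒜 be abelian categories and i : 𝒜' → 𝒜 a fully faithful exact functor whose essential image is a Serre subcategory of 𝒜. Suppose i admits an (everywhere defined) right adjoint p, with counit ε_A : i(pA) → A for each A ∈ 𝒜 (a monomorphism). Then the following are equivalent: (i) p is exact; (ii) the full subcategory Ker p = { A : pA ≅ 0 } is stable under quotients and contains the cokernel of ε_A for every A ∈ 𝒜; (iii) for every A ∈ 𝒜, the cokernel Q of ε_A satisfies Hom_𝒜(iX, Q) = 0 and Hom_𝒜(Q, iX) = 0 for all X ∈ 𝒜'. -/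
/-!
Write `ε_A : i (p A) ⟶ A` for the counit and `Q_A` for its cokernel. By adjunction, `p Q = 0` iff
every map `i X ⟶ Q` vanishes. If `p` is exact, then `p Q_A = coker (p ε_A) = 0` since `p ε_A` is an
isomorphism. If `Ker p` is closed under quotients, the image of a map `Q_A ⟶ i X` lies in the Serre
subcategory and in `Ker p`, hence is zero. Conversely, `p` is left exact as a right adjoint, so it
suffices that it preserves epimorphisms. Pull an epimorphism `f : X ⟶ Y` back along `ε_Y` to an
epimorphism `π : P ⟶ i (p Y)`: the cokernel of `ε_P ≫ π` is a quotient both of `i (p Y)` and of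
`Q_P`, so it lies in the Serre subcategory and vanishes by (iii). Hence `i (p π)` and `p π` are
epimorphisms, and so is `p π ≫ p ε_Y`, which factors through `p f`.
-/

open CategoryTheory Limits

namespace CategoryTheory

lemma ObjectProperty.isClosedUnderSubobjects_of_shortExact {C : Type*} [Category C]
    [Abelian C] (P : ObjectProperty C)
    (hP : ∀ S : ShortComplex C, S.ShortExact → (P S.X₂ ↔ P S.X₁ ∧ P S.X₃)) :
    P.IsClosedUnderSubobjects where
  prop_of_mono f _ hY := ((hP _ { exact := ShortComplex.exact_cokernel f }).1 hY).1

lemma ObjectProperty.isClosedUnderQuotients_of_shortExact {C : Type*} [Category C]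
    [Abelian C] (P : ObjectProperty C)
    (hP : ∀ S : ShortComplex C, S.ShortExact → (P S.X₂ ↔ P S.X₁ ∧ P S.X₃)) :
    P.IsClosedUnderQuotients where
  prop_of_epi f _ hX := ((hP _ { exact := ShortComplex.exact_kernel f }).1 hX).2

lemma Functor.preservesFiniteColimits_of_preservesEpimorphisms {C D : Type*} [Category C]
    [Category D] [Abelian C] [Abelian D] (G : C ⥤ D) [PreservesFiniteLimits G]
    [G.PreservesEpimorphisms] : PreservesFiniteColimits G := by
  have : G.Additive := G.additive_of_preserves_binary_products
  have := G.preservesHomology_of_preservesEpis_and_kernels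
  exact G.preservesFiniteColimits_of_preservesHomology

namespace Adjunction

section ZeroMorphisms

variable {C D : Type*} [Category C] [Category D] [HasZeroMorphisms C] [HasZeroMorphisms D]
  {L : C ⥤ D} {R : D ⥤ C}

lemma isZero_right_obj_iff (adj : L ⊣ R) [L.PreservesZeroMorphisms] [R.PreservesZeroMorphisms]
    (Y : D) :
    IsZero (R.obj Y) ↔ ∀ (X : C) (g : L.obj X ⟶ Y), g = 0 := by
  refine ⟨fun hY X g => ?_, fun h => ?_⟩
  · rw [← (adj.homEquiv X Y).symm_apply_apply g, hY.eq_of_tgt (adj.homEquiv X Y g) 0,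
      homEquiv_counit, L.map_zero, zero_comp]
  · rw [IsZero.iff_id_eq_zero, ← adj.right_triangle_components Y, h _ (adj.counit.app Y),
      R.map_zero, comp_zero]

lemma isZero_of_mem_essImage (adj : L ⊣ R) [L.PreservesZeroMorphisms]
    [R.PreservesZeroMorphisms] {Y : D} (hY : L.essImage Y) (hRY : IsZero (R.obj Y)) : IsZero Y := by
  obtain ⟨X, ⟨e⟩⟩ := hY
  exact IsZero.of_epi_eq_zero e.hom ((adj.isZero_right_obj_iff Y).1 hRY X e.hom)

end ZeroMorphisms

section Abelian

variable {A' A : Type*} [Category A'] [Category A] [Abelian A]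
  {i : A' ⥤ A} {p : A ⥤ A'}

lemma isZero_right_obj_cokernel_counit_app [Abelian A'] (adj : i ⊣ p) [i.Full] [i.Faithful]
    [PreservesFiniteColimits p] (X : A) : IsZero (p.obj (cokernel (adj.counit.app X))) :=
  (isZero_cokernel_of_epi (p.map (adj.counit.app X))).of_iso (PreservesCokernel.iso p _)

lemma hom_eq_zero_of_isZero_right_obj [Abelian A'] (adj : i ⊣ p) [i.PreservesZeroMorphisms]
    [i.essImage.IsClosedUnderSubobjects]
    (hquot : ∀ (X Y : A) (f : X ⟶ Y), Epi f → IsZero (p.obj X) → IsZero (p.obj Y))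
    {Q : A} (hQ : IsZero (p.obj Q)) {Y : A'} (g : Q ⟶ i.obj Y) : g = 0 := by
  have := adj.isRightAdjoint
  have himage : IsZero (image g) :=
    adj.isZero_of_mem_essImage (i.essImage.prop_of_mono (image.ι g) (i.obj_mem_essImage Y))
      (hquot _ _ (factorThruImage g) inferInstance hQ)
  rw [← image.fac g, himage.eq_zero_of_src (image.ι g), comp_zero]

lemma epi_counit_app_comp (adj : i ⊣ p) [i.essImage.IsClosedUnderQuotients] {B : A} {Z : A'}
    (e : B ⟶ i.obj Z) [Epi e]
    (hB : ∀ (W : A') (g : cokernel (adj.counit.app B) ⟶ i.obj W), g = 0) :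
    Epi (adj.counit.app B ≫ e) := by
  obtain ⟨W, ⟨φ⟩⟩ := i.essImage.prop_of_epi (cokernel.π (adj.counit.app B ≫ e))
    (i.obj_mem_essImage Z)
  let d : cokernel (adj.counit.app B) ⟶ i.obj W :=
    cokernel.desc _ (e ≫ cokernel.π _ ≫ φ.inv)
      (by rw [← Category.assoc, cokernel.condition_assoc, zero_comp])
  have hd : e ≫ cokernel.π (adj.counit.app B ≫ e) ≫ φ.inv = cokernel.π _ ≫ d :=
    (cokernel.π_desc _ _ _).symm
  rw [hB W d, comp_zero] at hd
  refine Preadditive.epi_of_cokernel_zero ?_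
  rw [← cancel_epi e, ← cancel_mono φ.inv]
  simpa using hd

lemma preservesEpimorphisms_of_hom_cokernel_counit_eq_zero (adj : i ⊣ p) [i.Full] [i.Faithful]
    [i.essImage.IsClosedUnderQuotients]
    (h : ∀ (X : A) (W : A') (g : cokernel (adj.counit.app X) ⟶ i.obj W), g = 0) :
    p.PreservesEpimorphisms where
  preserves {X Y} f _ := by
    let π₁ := pullback.fst (adj.counit.app Y) f
    let π₂ := pullback.snd (adj.counit.app Y) f
    have hπ₁ : i.map (p.map π₁) ≫ adj.counit.app (i.obj (p.obj Y)) = adj.counit.app _ ≫ π₁ :=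
      adj.counit_naturality π₁
    have : Epi (i.map (p.map π₁) ≫ adj.counit.app (i.obj (p.obj Y))) := by
      rw [hπ₁]
      exact adj.epi_counit_app_comp π₁ (h _)
    have : Epi (p.map π₁) := i.epi_of_epi_map ((epi_comp_iff_of_isIso _ _).1 this)
    have : Epi (p.map π₂ ≫ p.map f) := by
      rw [← p.map_comp, ← pullback.condition, p.map_comp]
      infer_instance
    exact epi_of_epi (p.map π₂) (p.map f)

end Abelian

end Adjunction

end CategoryTheory

open CategoryTheory.Adjunction in
theorem stmt_10_general {A' : Type*} {A : Type*} [Category A'] [Category A]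
    [Abelian A'] [Abelian A]
    (i : A' ⥤ A) [i.Full] [i.Faithful]
    (hSerre : ∀ (S : ShortComplex A), S.ShortExact →
        (i.essImage S.X₂ ↔ (i.essImage S.X₁ ∧ i.essImage S.X₃)))
    (p : A ⥤ A') (adj : i ⊣ p) :
    ((Nonempty (PreservesFiniteLimits p) ∧ Nonempty (PreservesFiniteColimits p)) ↔
      ((∀ (X Y : A) (f : X ⟶ Y), Epi f → IsZero (p.obj X) → IsZero (p.obj Y)) ∧
       (∀ X : A, IsZero (p.obj (cokernel (adj.counit.app X)))))) ∧
    (((∀ (X Y : A) (f : X ⟶ Y), Epi f → IsZero (p.obj X) → IsZero (p.obj Y)) ∧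
       (∀ X : A, IsZero (p.obj (cokernel (adj.counit.app X))))) ↔
      (∀ X : A,
        (∀ (Y : A') (g : i.obj Y ⟶ cokernel (adj.counit.app X)), g = 0) ∧
        (∀ (Y : A') (g : cokernel (adj.counit.app X) ⟶ i.obj Y), g = 0))) := by
  have := adj.isRightAdjoint
  have := i.essImage.isClosedUnderSubobjects_of_shortExact hSerre
  have := i.essImage.isClosedUnderQuotients_of_shortExact hSerre
  have h12 : Nonempty (PreservesFiniteLimits p) ∧ Nonempty (PreservesFiniteColimits p) →
      (∀ (X Y : A) (f : X ⟶ Y), Epi f → IsZero (p.obj X) → IsZero (p.obj Y)) ∧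
        ∀ X : A, IsZero (p.obj (cokernel (adj.counit.app X))) :=
    fun ⟨_, ⟨_⟩⟩ => ⟨fun _ _ f _ hX => hX.of_epi (p.map f),
      adj.isZero_right_obj_cokernel_counit_app⟩
  have h23 : ((∀ (X Y : A) (f : X ⟶ Y), Epi f → IsZero (p.obj X) → IsZero (p.obj Y)) ∧
        ∀ X : A, IsZero (p.obj (cokernel (adj.counit.app X)))) →
      ∀ X : A, (∀ (Y : A') (g : i.obj Y ⟶ cokernel (adj.counit.app X)), g = 0) ∧
        ∀ (Y : A') (g : cokernel (adj.counit.app X) ⟶ i.obj Y), g = 0 :=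
    fun ⟨hquot, hQ⟩ X => ⟨(adj.isZero_right_obj_iff _).1 (hQ X),
      fun _ => adj.hom_eq_zero_of_isZero_right_obj hquot (hQ X)⟩
  have h31 : (∀ X : A, (∀ (Y : A') (g : i.obj Y ⟶ cokernel (adj.counit.app X)), g = 0) ∧
        ∀ (Y : A') (g : cokernel (adj.counit.app X) ⟶ i.obj Y), g = 0) →
      Nonempty (PreservesFiniteLimits p) ∧ Nonempty (PreservesFiniteColimits p) := fun h => by
    have := adj.preservesEpimorphisms_of_hom_cokernel_counit_eq_zero fun X => (h X).2
    exact ⟨⟨inferInstance⟩, ⟨p.preservesFiniteColimits_of_preservesEpimorphisms⟩⟩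
  exact ⟨⟨h12, h31 ∘ h23⟩, ⟨h23, h12 ∘ h31⟩⟩

/-- Proposition D.1.8: for `i : 𝒜' ⥤ 𝒜` fully faithful exact with Serre essential image and
an everywhere defined right adjoint `p`, the following are equivalent: (i) `p` is exact;
(ii) `Ker p` is stable under quotients and contains the cokernel of each counit map;
(iii) for every `A`, with `Q` the cokernel of the counit `i p A ⟶ A`, one has
`Hom(i X, Q) = 0` and `Hom(Q, i X) = 0` for all `X ∈ 𝒜'`. -/
theorem stmt_10 {A' : Type*} {A : Type*} [Category A'] [Category A]
    [Abelian A'] [Abelian A]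
    (i : A' ⥤ A) [i.Full] [i.Faithful]
    [PreservesFiniteLimits i] [PreservesFiniteColimits i]
    (hSerre : ∀ (S : ShortComplex A), S.ShortExact →
        (i.essImage S.X₂ ↔ (i.essImage S.X₁ ∧ i.essImage S.X₃)))
    (p : A ⥤ A') (adj : i ⊣ p) :
    ((Nonempty (PreservesFiniteLimits p) ∧ Nonempty (PreservesFiniteColimits p)) ↔
      ((∀ (X Y : A) (f : X ⟶ Y), Epi f → IsZero (p.obj X) → IsZero (p.obj Y)) ∧
       (∀ X : A, IsZero (p.obj (cokernel (adj.counit.app X)))))) ∧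
    (((∀ (X Y : A) (f : X ⟶ Y), Epi f → IsZero (p.obj X) → IsZero (p.obj Y)) ∧
       (∀ X : A, IsZero (p.obj (cokernel (adj.counit.app X))))) ↔
      (∀ X : A,
        (∀ (Y : A') (g : i.obj Y ⟶ cokernel (adj.counit.app X)), g = 0) ∧
        (∀ (Y : A') (g : cokernel (adj.counit.app X) ⟶ i.obj Y), g = 0))) :=
  stmt_10_general i hSerre p adj
end

section
/- Let 𝒜' and 𝒜 be abelian categories and i : 𝒜' → 𝒜 a fully faithful exact functor whose essential image is a Serre subcategory of 𝒜, and suppose i admits an exact right adjoint. Then every object A ∈ 𝒜 fits into a short exact sequence 0 → iX → A → Q → 0 with X ∈ 𝒜' and Hom_𝒜(iY, Q) = 0 = Hom_𝒜(Q, iY) for all Y ∈ 𝒜'; moreover this sequence is unique: if m₁ : iX₁ → A and m₂ : iX₂ → A are two monomorphisms whose cokernels both satisfy these vanishing conditions, then m₁ and m₂ define the same subobject of A, i.e. there is an isomorphism u : iX₁ ≅ iX₂ with m₁ = u ∘ m₂. -/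
open CategoryTheory Limits

/-- Proposition D.1.9 (2), existence and uniqueness: if `i : 𝒜' ⥤ 𝒜` is fully faithful
exact with Serre essential image and admits an exact right adjoint, then every `A` fits
into a short exact sequence `0 → i X → A → Q → 0` with `Hom(i Y, Q) = 0 = Hom(Q, i Y)`
for all `Y`, and this sequence is unique: two such monomorphisms define the same subobject
of `A`. -/
theorem stmt_12 {A' : Type*} {A : Type*} [Category A'] [Category A]
    [Abelian A'] [Abelian A]
    (i : A' ⥤ A) [i.Full] [i.Faithful]
    [PreservesFiniteLimits i] [PreservesFiniteColimits i]
    (hSerre : ∀ (S : ShortComplex A), S.ShortExact →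
        (i.essImage S.X₂ ↔ (i.essImage S.X₁ ∧ i.essImage S.X₃)))
    (hadj : ∃ p : A ⥤ A', Nonempty (i ⊣ p) ∧
        Nonempty (PreservesFiniteLimits p) ∧ Nonempty (PreservesFiniteColimits p)) :
    ∀ X : A,
      (∃ (Y : A') (m : i.obj Y ⟶ X), Mono m ∧
        (∀ (Z : A') (g : i.obj Z ⟶ cokernel m), g = 0) ∧
        (∀ (Z : A') (g : cokernel m ⟶ i.obj Z), g = 0)) ∧
      (∀ (Y₁ Y₂ : A') (m₁ : i.obj Y₁ ⟶ X) (m₂ : i.obj Y₂ ⟶ X),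
        Mono m₁ → Mono m₂ →
        (∀ (Z : A') (g : i.obj Z ⟶ cokernel m₁), g = 0) →
        (∀ (Z : A') (g : cokernel m₁ ⟶ i.obj Z), g = 0) →
        (∀ (Z : A') (g : i.obj Z ⟶ cokernel m₂), g = 0) →
        (∀ (Z : A') (g : cokernel m₂ ⟶ i.obj Z), g = 0) →
        ∃ u : i.obj Y₁ ≅ i.obj Y₂, m₁ = u.hom ≫ m₂) := by
  obtain ⟨p, ⟨adj⟩, ⟨hpl⟩, ⟨hpc⟩⟩ := hadj
  -- closure of the essential image under quotients and subobjects
  have hquot : ∀ {B C : A} (q : B ⟶ C), Epi q → i.essImage B → i.essImage C := by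
    intro B C q hq hB
    haveI := hq
    have hS : (ShortComplex.mk (kernel.ι q) q (kernel.condition q)).ShortExact :=
      { exact := ShortComplex.exact_of_f_is_kernel _ (kernelIsKernel q) }
    exact ((hSerre _ hS).mp hB).2
  have hsub : ∀ {B C : A} (mm : B ⟶ C), Mono mm → i.essImage C → i.essImage B := by
    intro B C mm hm hC
    haveI := hm
    have hS : (ShortComplex.mk mm (cokernel.π mm) (cokernel.condition mm)).ShortExact :=
      { exact := ShortComplex.exact_of_g_is_cokernel _ (cokernelIsCokernel mm) }
    exact ((hSerre _ hS).mp hC).1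
  intro A₀
  constructor
  · -- existence
    set ε := adj.counit.app A₀ with hε
    have hepi_f₁ : Epi (factorThruImage ε) := inferInstance
    have hIm : i.essImage (image ε) :=
      hquot (factorThruImage ε) hepi_f₁ (i.obj_mem_essImage (p.obj A₀))
    obtain ⟨Y, ⟨e⟩⟩ := hIm
    set m : i.obj Y ⟶ A₀ := e.hom ≫ image.ι ε with hm
    have h1 : e.inv ≫ m = image.ι ε := by rw [hm, Iso.inv_hom_id_assoc]
    have hεm : ε = factorThruImage ε ≫ e.inv ≫ m := by rw [h1, image.fac]
    have hεπ : ε ≫ cokernel.π m = 0 := by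
      have h2 : ε ≫ cokernel.π m = (factorThruImage ε ≫ e.inv ≫ m) ≫ cokernel.π m := by
        rw [← hεm]
      rw [h2]
      simp
    refine ⟨Y, m, mono_comp _ _, ?_, ?_⟩
    · -- no nonzero maps from the essential image into the cokernel
      intro Z g
      have hεsplit : Epi (adj.unit.app (p.obj A₀) ≫ p.map ε) := by
        rw [adj.right_triangle_components]
        exact (inferInstance : Epi (𝟙 (p.obj A₀)))
      haveI := hεsplit
      have hεepi : Epi (p.map ε) := epi_of_epi (adj.unit.app (p.obj A₀)) (p.map ε)
      have hιepi : Epi (p.map (image.ι ε)) := by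
        have : Epi (p.map (factorThruImage ε) ≫ p.map (image.ι ε)) := by
          rw [← p.map_comp, image.fac]; exact hεepi
        exact epi_of_epi (p.map (factorThruImage ε)) (p.map (image.ι ε))
      have hmepi : Epi (p.map m) := by
        rw [hm, p.map_comp]; exact epi_comp _ _
      haveI := hmepi
      have hcoker : IsZero (cokernel (p.map m)) :=
        IsZero.of_epi_eq_zero (cokernel.π _) (cokernel.π_of_epi _)
      have hpQ : IsZero (p.obj (cokernel m)) :=
        hcoker.of_iso (PreservesCokernel.iso p _)
      have heq := hpQ.eq_of_tgt (adj.homEquiv Z _ g) (adj.homEquiv Z _ 0)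
      exact (adj.homEquiv Z _).injective heq
    · -- no nonzero maps from the cokernel into the essential image
      intro Z g
      have hεh : ε ≫ (cokernel.π m ≫ g) = 0 := by
        rw [← Category.assoc, hεπ, zero_comp]
      haveI : IsIso (adj.counit.app (i.obj Z)) :=
        adj.isIso_counit_app_of_iso (Iso.refl (i.obj Z))
      have hnat := adj.counit.naturality (cokernel.π m ≫ g)
      simp only [Functor.comp_map, Functor.id_map] at hnat
      have hzero : i.map (p.map (cokernel.π m ≫ g)) = 0 := by
        rw [← cancel_mono (adj.counit.app (i.obj Z)), hnat, zero_comp]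
        exact hεh
      have hpz : p.map (cokernel.π m ≫ g) = 0 := by
        apply i.map_injective
        rw [hzero, i.map_zero]
      have himg : i.essImage (image g) :=
        hsub (image.ι g) inferInstance (i.obj_mem_essImage Z)
      obtain ⟨W, ⟨eW⟩⟩ := himg
      have hfac : (cokernel.π m ≫ factorThruImage g) ≫ image.ι g = cokernel.π m ≫ g := by
        rw [Category.assoc, image.fac]
      haveI : Epi (cokernel.π m ≫ factorThruImage g) := epi_comp _ _
      haveI : Epi (p.map (cokernel.π m ≫ factorThruImage g)) := p.map_epi _
      have hφzero : p.map (cokernel.π m ≫ factorThruImage g) = 0 := by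
        have h5 : p.map (cokernel.π m ≫ factorThruImage g) ≫ p.map (image.ι g) = 0 := by
          rw [← p.map_comp, hfac, hpz]
        exact zero_of_comp_mono _ h5
      have hpI : IsZero (p.obj (image g)) := IsZero.of_epi_eq_zero _ hφzero
      have hW : IsZero W :=
        hpI.of_iso ((asIso (adj.unit.app W)) ≪≫ p.mapIso eW)
      have hiW : IsZero (i.obj W) := i.map_isZero hW
      have hI : IsZero (image g) := hiW.of_iso eW.symm
      calc g = factorThruImage g ≫ image.ι g := (image.fac g).symm
        _ = 0 := by rw [hI.eq_of_tgt (factorThruImage g) 0, zero_comp]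
  · -- uniqueness
    intro Y₁ Y₂ m₁ m₂ hm₁ hm₂ h₁Z _ h₂Z _
    haveI := hm₁; haveI := hm₂
    have hf : m₁ ≫ cokernel.π m₂ = 0 := h₂Z Y₁ _
    have hg : m₂ ≫ cokernel.π m₁ = 0 := h₁Z Y₂ _
    refine ⟨⟨Abelian.monoLift m₂ m₁ hf, Abelian.monoLift m₁ m₂ hg, ?_, ?_⟩, ?_⟩
    · rw [← cancel_mono m₁]
      simp [Abelian.monoLift_comp]
    · rw [← cancel_mono m₂]
      simp [Abelian.monoLift_comp]
    · exact (Abelian.monoLift_comp m₂ m₁ hf).symm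
end

section
/- Let 𝒜' and 𝒜 be abelian categories and i : 𝒜' → 𝒜 a fully faithful exact functor whose essential image is a Serre subcategory of 𝒜, and suppose i admits an exact right adjoint. If X ∈ 𝒜' and Q ∈ 𝒜 satisfies Hom_𝒜(iY, Q) = 0 and Hom_𝒜(Q, iY) = 0 for all Y ∈ 𝒜', then Ext^r_𝒜(iX, Q) = 0 for all r ≥ 0. -/
/-!
The counit `ε : p ⋙ i ⟶ 𝟭` of the adjunction is a natural transformation from an exact
endofunctor of `𝒜` to the identity, so it induces a natural transformation `θ` from the derived
functor of `p ⋙ i` to the identity of `D(𝒜)`, computed degreewise on complexes. Since `i` is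
fully faithful, `ε` is invertible at `i X`, so `θ` is invertible at `(i X)[0]`; since
`Hom(i (p Q), Q) = 0`, `ε` vanishes at `Q`, so `θ` vanishes at `Q[r]`. Naturality of `θ` along
any `f : (i X)[0] ⟶ Q[r]` then reads `θ ≫ f = 0`, hence `f = 0`.
-/

open CategoryTheory Limits Abelian

universe w v' v u' u

namespace CategoryTheory

lemma NatTrans.app_eq_zero_of_iso {C D : Type*} [Category C] [Category D] [HasZeroMorphisms D]
    {F G : C ⥤ D} (α : F ⟶ G) {X Y : C} (e : X ≅ Y) (h : α.app X = 0) : α.app Y = 0 := by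
  rw [← cancel_epi (F.map e.hom), α.naturality, h, zero_comp, comp_zero]

lemma NatTrans.eq_zero_of_isIso_app_of_app_eq_zero {C : Type*} [Category C] [HasZeroMorphisms C]
    {Φ : C ⥤ C} (θ : Φ ⟶ 𝟭 C) {U V : C} (f : U ⟶ V) [IsIso (θ.app U)] (hV : θ.app V = 0) :
    f = 0 := by
  rw [← cancel_epi (θ.app U), ← Functor.id_map f, ← θ.naturality, hV, comp_zero, comp_zero]

section single

variable {C D ι : Type*} [Category C] [Category D] [HasZeroObject C] [HasZeroMorphisms C]
  [HasZeroMorphisms D] [DecidableEq ι] {F G : C ⥤ D} [G.PreservesZeroMorphisms] (α : F ⟶ G)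
  (c : ComplexShape ι) (j : ι) {X : C}

lemma NatTrans.app_single_X_eq_zero (h : α.app X = 0) (m : ι) :
    α.app (((HomologicalComplex.single C c j).obj X).X m) = 0 := by
  by_cases hm : m = j
  · subst hm
    exact α.app_eq_zero_of_iso (HomologicalComplex.singleObjXSelf c m X).symm h
  · exact (G.map_isZero (HomologicalComplex.isZero_single_obj_X c j X m hm)).eq_of_tgt _ _

lemma NatTrans.isIso_app_single_X [F.PreservesZeroMorphisms] [IsIso (α.app X)] (m : ι) :
    IsIso (α.app (((HomologicalComplex.single C c j).obj X).X m)) := by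
  by_cases hm : m = j
  · subst hm
    exact (α.isIso_app_iff_of_iso (HomologicalComplex.singleObjXSelf c m X)).2 inferInstance
  · have hZ := HomologicalComplex.isZero_single_obj_X c j X m hm
    exact ⟨0, (F.map_isZero hZ).eq_of_src _ _, (G.map_isZero hZ).eq_of_src _ _⟩

end single

section derived

variable {C : Type u} [Category.{v} C] [Abelian C] {F : C ⥤ C} [F.Additive]
  [PreservesFiniteLimits F] [PreservesFiniteColimits F] (α : F ⟶ 𝟭 C)

section

variable [HasDerivedCategory.{w} C]

namespace NatTrans

noncomputable def mapDerivedCategoryToId : F.mapDerivedCategory ⟶ 𝟭 (DerivedCategory C) :=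
  Localization.liftNatTrans DerivedCategory.Q (HomologicalComplex.quasiIso C (.up ℤ))
    (F.mapHomologicalComplex _ ⋙ DerivedCategory.Q) DerivedCategory.Q F.mapDerivedCategory (𝟭 _)
    (Functor.whiskerRight (mapHomologicalComplex α _ ≫ (Functor.mapHomologicalComplexIdIso C _).hom)
      DerivedCategory.Q ≫ DerivedCategory.Q.leftUnitor.hom)

lemma mapDerivedCategoryToId_app_Q_obj (K : CochainComplex C ℤ) :
    α.mapDerivedCategoryToId.app (DerivedCategory.Q.obj K) =
      F.mapDerivedCategoryFactors.hom.app K ≫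
        DerivedCategory.Q.map ((mapHomologicalComplex α _).app K ≫
          (Functor.mapHomologicalComplexIdIso C _).hom.app K) := by
  simp only [mapDerivedCategoryToId, Localization.liftNatTrans_app, Localization.Lifting.id_iso,
    Functor.rightUnitor_inv_app, Functor.leftUnitor_hom_app, comp_app, Functor.whiskerRight_app,
    Functor.map_comp, Functor.id_obj, Functor.comp_obj, Category.comp_id]
  rfl

lemma isIso_mapDerivedCategoryToId_app_Q_obj (K : CochainComplex C ℤ)
    (h : ∀ n, IsIso (α.app (K.X n))) :
    IsIso (α.mapDerivedCategoryToId.app (DerivedCategory.Q.obj K)) := by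
  have : ∀ n, IsIso (((mapHomologicalComplex α (.up ℤ)).app K).f n) := h
  have : IsIso ((mapHomologicalComplex α (.up ℤ)).app K) :=
    HomologicalComplex.Hom.isIso_of_components _
  rw [mapDerivedCategoryToId_app_Q_obj]
  infer_instance

lemma mapDerivedCategoryToId_app_Q_obj_eq_zero (K : CochainComplex C ℤ)
    (h : ∀ n, α.app (K.X n) = 0) : α.mapDerivedCategoryToId.app (DerivedCategory.Q.obj K) = 0 := by
  have : (mapHomologicalComplex α (.up ℤ)).app K = 0 := by ext n; exact h n
  rw [mapDerivedCategoryToId_app_Q_obj, this, zero_comp, Functor.map_zero, comp_zero]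

end NatTrans

lemma DerivedCategory.eq_zero_of_isIso_app_of_app_eq_zero {X Y : C} [IsIso (α.app X)]
    (hY : α.app Y = 0)
    {a b n : ℤ} (f : (DerivedCategory.singleFunctor C a).obj X ⟶
      ((DerivedCategory.singleFunctor C b).obj Y)⟦n⟧) : f = 0 := by
  have : IsIso (α.mapDerivedCategoryToId.app ((DerivedCategory.singleFunctor C a).obj X)) :=
    α.isIso_mapDerivedCategoryToId_app_Q_obj _ (α.isIso_app_single_X (.up ℤ) a)
  let e : ((DerivedCategory.singleFunctor C b).obj Y)⟦n⟧ ≅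
      DerivedCategory.Q.obj (((HomologicalComplex.single C _ b).obj Y)⟦n⟧) :=
    ((DerivedCategory.Q.commShiftIso n).app _).symm
  -- `θ` is only computed on complexes, so the shift is moved inside `Q`
  rw [← cancel_mono e.hom, zero_comp]
  refine α.mapDerivedCategoryToId.eq_zero_of_isIso_app_of_app_eq_zero _ ?_
  exact α.mapDerivedCategoryToId_app_Q_obj_eq_zero _
    (fun m => α.app_single_X_eq_zero (.up ℤ) b hY (m + n))

end

lemma Abelian.Ext.eq_zero_of_isIso_app_of_app_eq_zero [HasExt.{w} C] {X Y : C}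
    [IsIso (α.app X)] (hY : α.app Y = 0) {n : ℕ} (e : Ext X Y n) : e = 0 := by
  let := HasDerivedCategory.standard C
  ext
  rw [zero_hom]
  exact DerivedCategory.eq_zero_of_isIso_app_of_app_eq_zero α hY _

end derived
end CategoryTheory

theorem stmt_13_general {A' : Type u'} {A : Type u} [Category.{v'} A'] [Category.{v} A]
    [Abelian A'] [Abelian A] [HasExt.{w} A]
    (i : A' ⥤ A) [i.Full] [i.Faithful]
    [PreservesFiniteLimits i] [PreservesFiniteColimits i]
    (hadj : ∃ p : A ⥤ A', Nonempty (i ⊣ p) ∧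
        Nonempty (PreservesFiniteLimits p) ∧ Nonempty (PreservesFiniteColimits p))
    (Q : A)
    (hQ₁ : ∀ (Y : A') (g : i.obj Y ⟶ Q), g = 0)
    (X : A') (r : ℕ) (e : Ext (i.obj X) Q r) :
    e = 0 := by
  obtain ⟨p, ⟨adj⟩, ⟨_⟩, ⟨_⟩⟩ := hadj
  have : i.Additive := Functor.additive_of_preserves_binary_products i
  have : p.Additive := Functor.additive_of_preserves_binary_products p
  have : IsIso (adj.counit.app (i.obj X)) := adj.isIso_counit_app_of_iso (Iso.refl _)
  exact Ext.eq_zero_of_isIso_app_of_app_eq_zero adj.counit (hQ₁ _ _) e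

/-- Proposition D.1.9 (2), Ext-vanishing: if `i : 𝒜' ⥤ 𝒜` is fully faithful exact with
Serre essential image and admits an exact right adjoint, and if `Q ∈ 𝒜` satisfies
`Hom(i Y, Q) = 0 = Hom(Q, i Y)` for all `Y ∈ 𝒜'`, then `Ext^r(i X, Q) = 0` for all
`X ∈ 𝒜'` and all `r ≥ 0`. -/
theorem stmt_13 {A' : Type u'} {A : Type u} [Category.{v'} A'] [Category.{v} A]
    [Abelian A'] [Abelian A] [HasExt.{w} A]
    (i : A' ⥤ A) [i.Full] [i.Faithful]
    [PreservesFiniteLimits i] [PreservesFiniteColimits i]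
    (hSerre : ∀ (S : ShortComplex A), S.ShortExact →
        (i.essImage S.X₂ ↔ (i.essImage S.X₁ ∧ i.essImage S.X₃)))
    (hadj : ∃ p : A ⥤ A', Nonempty (i ⊣ p) ∧
        Nonempty (PreservesFiniteLimits p) ∧ Nonempty (PreservesFiniteColimits p))
    (Q : A)
    (hQ₁ : ∀ (Y : A') (g : i.obj Y ⟶ Q), g = 0)
    (hQ₂ : ∀ (Y : A') (g : Q ⟶ i.obj Y), g = 0)
    (X : A') (r : ℕ) (e : Ext (i.obj X) Q r) :
    e = 0 :=
  stmt_13_general i hadj Q hQ₁ X r e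
end

section
/- Let 𝒜 be an abelian category in which every object is a finite biproduct of simple objects (𝒜 is semi-simple), and let i : 𝒜' → 𝒜 be a fully faithful exact functor from an abelian category 𝒜' whose essential image is a Serre subcategory of 𝒜. Then i admits an exact right adjoint; equivalently, for every A ∈ 𝒜 there exist X ∈ 𝒜' and a monomorphism m : iX → A such that Hom_𝒜(iY, coker m) = 0 and Hom_𝒜(coker m, iY) = 0 for all Y ∈ 𝒜'. -/
/-!
Write `X ≅ ⨁ Sⱼ` with every `Sⱼ` simple. As the essential image of `i` is closed under
subobjects and quotients, there are no nonzero maps in either direction between it and a simple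
object outside it. Splitting off the summands that lie in the image therefore gives a split
monomorphism `i Y ⟶ X` whose cokernel is orthogonal to the image on both sides, so every map
between `X` and the image factors through `i Y`. Hence `X ↦ Y` is both a right and a left adjoint
of `i`, and in particular exact.
-/

open CategoryTheory Limits

universe v' v u' u

namespace CategoryTheory

section SplitMono

variable {C : Type*} [Category C] [Preadditive C] {M X : C} {m : M ⟶ X} {r : X ⟶ M}
  [HasCokernel m]

lemma exists_cokernel_π_comp_eq_id_sub (hmr : m ≫ r = 𝟙 M) :
    ∃ q : cokernel m ⟶ X, cokernel.π m ≫ q = 𝟙 X - r ≫ m :=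
  ⟨cokernel.desc m _ (by simp [reassoc_of% hmr]), cokernel.π_desc _ _ _⟩

lemma comp_retraction_comp_eq_self (hmr : m ≫ r = 𝟙 M) {W : C} (g : W ⟶ X)
    (hg : ∀ h : W ⟶ cokernel m, h = 0) : g ≫ r ≫ m = g := by
  obtain ⟨q, hq⟩ := exists_cokernel_π_comp_eq_id_sub hmr
  have : g ≫ (𝟙 X - r ≫ m) = 0 := by rw [← hq, ← Category.assoc, hg (g ≫ _), zero_comp]
  rwa [Preadditive.comp_sub, Category.comp_id, sub_eq_zero, eq_comm] at this

lemma retraction_comp_comp_eq_self (hmr : m ≫ r = 𝟙 M) {W : C} (g : X ⟶ W)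
    (hg : ∀ h : cokernel m ⟶ W, h = 0) : r ≫ m ≫ g = g := by
  obtain ⟨q, hq⟩ := exists_cokernel_π_comp_eq_id_sub hmr
  have : (𝟙 X - r ≫ m) ≫ g = 0 := by rw [← hq, Category.assoc, hg (q ≫ g), comp_zero]
  rwa [Preadditive.sub_comp, Category.id_comp, Category.assoc, sub_eq_zero, eq_comm] at this

end SplitMono

namespace ObjectProperty

variable {C : Type*} [Category C] [Abelian C] {P : ObjectProperty C}

lemma isClosedUnderQuotients_of_shortExact_s14
    (hP : ∀ S : ShortComplex C, S.ShortExact → P S.X₂ → P S.X₃) : P.IsClosedUnderQuotients where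
  prop_of_epi f _ := hP (ShortComplex.kernelSequence f)
    { exact := ShortComplex.kernelSequence_exact f, epi_g := ‹_› }

lemma isClosedUnderSubobjects_of_shortExact_s14
    (hP : ∀ S : ShortComplex C, S.ShortExact → P S.X₂ → P S.X₁) : P.IsClosedUnderSubobjects where
  prop_of_mono f _ := hP (ShortComplex.cokernelSequence f)
    { exact := ShortComplex.cokernelSequence_exact f, mono_f := ‹_› }

variable {X S : C} [Simple S]

lemma eq_zero_of_hom_to_simple [P.IsClosedUnderQuotients] (hX : P X) (hS : ¬ P S)
    (g : X ⟶ S) : g = 0 := by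
  by_contra hg
  have := epi_of_nonzero_to_simple hg
  exact hS (P.prop_of_epi g hX)

lemma eq_zero_of_hom_from_simple [P.IsClosedUnderSubobjects] (hX : P X) (hS : ¬ P S)
    (g : S ⟶ X) : g = 0 := by
  by_contra hg
  have := mono_of_nonzero_from_simple hg
  exact hS (P.prop_of_mono g hX)

lemma eq_zero_of_hom_to_biproduct [P.IsClosedUnderQuotients] {ι : Type*} {f : ι → C}
    [HasBiproduct f] (hf : ∀ j, Simple (f j)) (hfP : ∀ j, ¬ P (f j)) (hX : P X)
    (g : X ⟶ ⨁ f) : g = 0 :=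
  biproduct.hom_ext _ _ fun j => by
    have := hf j
    simpa using eq_zero_of_hom_to_simple hX (hfP j) (g ≫ biproduct.π f j)

lemma eq_zero_of_hom_from_biproduct [P.IsClosedUnderSubobjects] {ι : Type*} {f : ι → C}
    [HasBiproduct f] (hf : ∀ j, Simple (f j)) (hfP : ∀ j, ¬ P (f j)) (hX : P X)
    (g : ⨁ f ⟶ X) : g = 0 :=
  biproduct.hom_ext' _ _ fun j => by
    have := hf j
    simpa using eq_zero_of_hom_from_simple hX (hfP j) (biproduct.ι f j ≫ g)

end ObjectProperty

namespace Functor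

section Splitting

variable {A' : Type u'} {A : Type u} [Category.{v'} A'] [Category.{v} A] [Preadditive A]
  [HasCokernels A]

structure EssImageSplitting (i : A' ⥤ A) (X : A) where
  obj : A'
  ι : i.obj obj ⟶ X
  r : X ⟶ i.obj obj
  ι_r : ι ≫ r = 𝟙 _
  hom_cokernel_eq_zero : ∀ (Z : A') (g : i.obj Z ⟶ cokernel ι), g = 0
  cokernel_hom_eq_zero : ∀ (Z : A') (g : cokernel ι ⟶ i.obj Z), g = 0

namespace EssImageSplitting

variable {i : A' ⥤ A}

attribute [simp] ι_r

@[simp]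
lemma ι_r_assoc {X : A} (d : i.EssImageSplitting X) {W : A} (h : i.obj d.obj ⟶ W) :
    d.ι ≫ d.r ≫ h = h := by
  rw [← Category.assoc, d.ι_r, Category.id_comp]

@[simp]
lemma comp_r_ι {X : A} (d : i.EssImageSplitting X) {Z : A'} (g : i.obj Z ⟶ X) :
    g ≫ d.r ≫ d.ι = g :=
  comp_retraction_comp_eq_self d.ι_r g (d.hom_cokernel_eq_zero Z)

@[simp]
lemma r_ι_comp {X : A} (d : i.EssImageSplitting X) {Z : A'} (g : X ⟶ i.obj Z) :
    d.r ≫ d.ι ≫ g = g :=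
  retraction_comp_comp_eq_self d.ι_r g (d.cokernel_hom_eq_zero Z)

variable [i.Full] [i.Faithful] (d : ∀ X, i.EssImageSplitting X)

-- Reducible, so that `(functor d).obj X` unifies with `(d X).obj` when rewriting below.
@[reducible]
noncomputable def functor : A ⥤ A' where
  obj X := (d X).obj
  map {X X'} f := i.preimage ((d X).ι ≫ f ≫ (d X').r)
  map_id X := i.map_injective (by simp)
  map_comp f h := i.map_injective (by simp)

noncomputable def adjunctionFunctor : i ⊣ functor d :=
  Adjunction.mkOfHomEquiv
    { homEquiv Z X :=
        { toFun g := i.preimage (g ≫ (d X).r)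
          invFun h := i.map h ≫ (d X).ι
          left_inv g := by simp
          right_inv h := i.map_injective (by simp) }
      homEquiv_naturality_left_symm := by simp
      homEquiv_naturality_right g f := i.map_injective (by simp) }

noncomputable def functorAdjunction : functor d ⊣ i :=
  Adjunction.mkOfHomEquiv
    { homEquiv X Z :=
        { toFun h := (d X).r ≫ i.map h
          invFun g := i.preimage ((d X).ι ≫ g)
          left_inv h := i.map_injective (by simp)
          right_inv g := by simp }
      homEquiv_naturality_left_symm f g := i.map_injective (by simp)
      homEquiv_naturality_right := by simp }

end EssImageSplitting

end Splitting

lemma nonempty_essImageSplitting_of_iso_biproduct {A' : Type u'} {A : Type u}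
    [Category.{v'} A'] [Category.{v} A] [Preadditive A'] [HasFiniteBiproducts A'] [Abelian A]
    [HasFiniteBiproducts A] (i : A' ⥤ A) [i.Additive]
    [i.essImage.IsClosedUnderQuotients] [i.essImage.IsClosedUnderSubobjects]
    {ι : Type} [Finite ι] {f : ι → A} (hf : ∀ j, Simple (f j)) {X : A} (e : X ≅ ⨁ f) :
    Nonempty (i.EssImageSplitting X) := by
  let p : ι → Prop := fun j => i.essImage (f j)
  let g : Subtype p → A' := fun j => j.2.witness
  let φ : i.obj (⨁ g) ≅ ⨁ Subtype.restrict p f :=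
    i.mapBiproduct g ≪≫ biproduct.mapIso fun j => j.2.getIso
  let m := φ.hom ≫ biproduct.fromSubtype f p ≫ e.inv
  let c : cokernel m ≅ ⨁ Subtype.restrict pᶜ f :=
    cokernelEpiComp _ _ ≪≫ cokernelCompIsIso _ _ ≪≫ cokernelBiproductFromSubtypeIso f p
  have hsimple : ∀ j : Subtype pᶜ, Simple (f j) := fun j => hf j
  have hnot : ∀ j : Subtype pᶜ, ¬ i.essImage (f j) := fun j => j.2
  exact ⟨{
    obj := ⨁ g
    ι := m
    r := e.hom ≫ biproduct.toSubtype f p ≫ φ.inv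
    ι_r := by simp [m]
    hom_cokernel_eq_zero Z h := (Preadditive.IsIso.comp_right_eq_zero h c.hom).1
      (ObjectProperty.eq_zero_of_hom_to_biproduct hsimple hnot (i.obj_mem_essImage Z) _)
    cokernel_hom_eq_zero Z h := (Preadditive.IsIso.comp_left_eq_zero c.inv h).1
      (ObjectProperty.eq_zero_of_hom_from_biproduct hsimple hnot (i.obj_mem_essImage Z) _) }⟩

end Functor

end CategoryTheory

theorem stmt_14_general {A' : Type*} {A : Type*} [Category A'] [Category A]
    [Abelian A'] [Abelian A] [Limits.HasFiniteBiproducts A]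
    (hss : ∀ X : A, ∃ (n : ℕ) (f : Fin n → A),
        (∀ j, Simple (f j)) ∧ Nonempty (X ≅ ⨁ f))
    (i : A' ⥤ A) [i.Full] [i.Faithful]
    [PreservesFiniteLimits i]
    (hSerre : ∀ (S : ShortComplex A), S.ShortExact →
        (i.essImage S.X₂ ↔ (i.essImage S.X₁ ∧ i.essImage S.X₃))) :
    (∃ p : A ⥤ A', Nonempty (i ⊣ p) ∧
        Nonempty (PreservesFiniteLimits p) ∧ Nonempty (PreservesFiniteColimits p)) ∧
    (∀ X : A, ∃ (Y : A') (m : i.obj Y ⟶ X), Mono m ∧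
        (∀ (Z : A') (g : i.obj Z ⟶ cokernel m), g = 0) ∧
        (∀ (Z : A') (g : cokernel m ⟶ i.obj Z), g = 0)) := by
  have : i.Additive := i.additive_of_preserves_binary_products
  have : HasFiniteBiproducts A' := Abelian.hasFiniteBiproducts
  have := ObjectProperty.isClosedUnderQuotients_of_shortExact_s14 fun S hS h => ((hSerre S hS).1 h).2
  have := ObjectProperty.isClosedUnderSubobjects_of_shortExact_s14 fun S hS h => ((hSerre S hS).1 h).1
  have hd (X : A) : Nonempty (i.EssImageSplitting X) := by
    obtain ⟨_, _, hf, ⟨e⟩⟩ := hss X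
    exact Functor.nonempty_essImageSplitting_of_iso_biproduct i hf e
  let d X := (hd X).some
  refine ⟨⟨Functor.EssImageSplitting.functor d,
    ⟨Functor.EssImageSplitting.adjunctionFunctor d⟩, ?_, ?_⟩,
    fun X => ⟨(d X).obj, (d X).ι, SplitMono.mono ⟨(d X).r, (d X).ι_r⟩,
      (d X).hom_cokernel_eq_zero, (d X).cokernel_hom_eq_zero⟩⟩
  · have := (Functor.EssImageSplitting.adjunctionFunctor d).isRightAdjoint
    exact ⟨inferInstance⟩
  · have := (Functor.EssImageSplitting.functorAdjunction d).isLeftAdjoint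
    exact ⟨inferInstance⟩

/-- Proposition D.1.9 (3): if `𝒜` is semi-simple (every object is a finite biproduct of
simple objects) and `i : 𝒜' ⥤ 𝒜` is fully faithful exact with Serre essential image, then
`i` admits an exact right adjoint; equivalently every `A` receives a monomorphism `m` from
an object of the image with `Hom(i Y, coker m) = 0 = Hom(coker m, i Y)` for all `Y`. -/
theorem stmt_14 {A' : Type*} {A : Type*} [Category A'] [Category A]
    [Abelian A'] [Abelian A] [Limits.HasFiniteBiproducts A]
    (hss : ∀ X : A, ∃ (n : ℕ) (f : Fin n → A),
        (∀ j, Simple (f j)) ∧ Nonempty (X ≅ ⨁ f))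
    (i : A' ⥤ A) [i.Full] [i.Faithful]
    [PreservesFiniteLimits i] [PreservesFiniteColimits i]
    (hSerre : ∀ (S : ShortComplex A), S.ShortExact →
        (i.essImage S.X₂ ↔ (i.essImage S.X₁ ∧ i.essImage S.X₃))) :
    (∃ p : A ⥤ A', Nonempty (i ⊣ p) ∧
        Nonempty (PreservesFiniteLimits p) ∧ Nonempty (PreservesFiniteColimits p)) ∧
    (∀ X : A, ∃ (Y : A') (m : i.obj Y ⟶ X), Mono m ∧
        (∀ (Z : A') (g : i.obj Z ⟶ cokernel m), g = 0) ∧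
        (∀ (Z : A') (g : cokernel m ⟶ i.obj Z), g = 0)) :=
  stmt_14_general hss i hSerre
end

section
/- Let 𝒯 be a pretriangulated category and 𝒯' a thick subcategory of 𝒯 (a strictly full triangulated subcategory closed under direct summands), with inclusion functor i : 𝒯' → 𝒯. Then i admits a right adjoint if and only if for every object A of 𝒯 there exist an object A' of 𝒯' and a morphism f : iA' → A such that, in a distinguished triangle iA' →f A → C → iA'[1], one has Hom_𝒯(iX, C) = 0 for every X ∈ 𝒯'. Moreover, when this holds, every A sits in a distinguished triangle A₁ → A → A₂ → A₁[1] with A₁ in 𝒯' and Hom_𝒯(iX, A₂) = 0 for all X ∈ 𝒯', and this triangle is unique up to isomorphism and functorial in A. -/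
open CategoryTheory Limits Pretriangulated

/-!
A morphism `f : A' ⟶ A` with `A'` in `𝒯'` is a coreflection of `A` exactly when composition
with `f` is bijective on `Hom(X, -)` for all `X` in `𝒯'`. Since `𝒯'` is stable under shifts,
the long exact `Hom(X, -)`-sequence of a triangle `A' → A → C → A'⟦1⟧` shows that this happens
iff `Hom(X, C) = 0` for all `X` in `𝒯'`. The same exact sequences give functoriality: a map
`A ⟶ B` lifts to the triangles since `Hom(A₁, B₂) = 0`, and uniquely since also
`Hom(A₁, B₂⟦-1⟧) = Hom(A₁⟦1⟧, B₂) = 0`; uniqueness of the triangle up to isomorphism follows.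
-/

namespace CategoryTheory.ObjectProperty

variable {𝒯 : Type*} [Category 𝒯]

lemma rightOrthogonal_iff_forall [HasZeroMorphisms 𝒯] (P : ObjectProperty 𝒯) (Y : 𝒯) :
    P.rightOrthogonal Y ↔ ∀ X : 𝒯, P X → ∀ φ : X ⟶ Y, φ = 0 :=
  ⟨fun h _ hX φ => h φ hX, fun h _ φ hX => h _ hX φ⟩

variable [Preadditive 𝒯] [HasShift 𝒯 ℤ] [∀ n : ℤ, (shiftFunctor 𝒯 n).Additive]
  {P : ObjectProperty 𝒯}

lemma eq_zero_of_comp_shift_map_eq_zero [P.IsStableUnderShift ℤ] {A' A : 𝒯} {f : A' ⟶ A}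
    (hf : ∀ X, P X → Function.Injective (fun β : X ⟶ A' => β ≫ f)) (n : ℤ)
    {X : 𝒯} (hX : P X) (ψ : X ⟶ A'⟦n⟧) (hψ : ψ ≫ f⟦n⟧' = 0) : ψ = 0 := by
  let e := (shiftFunctorCompIsoId 𝒯 (-n) n (by simp)).app X
  obtain ⟨g, hg⟩ := (shiftFunctor 𝒯 n).map_surjective (e.hom ≫ ψ)
  have hgf : g ≫ f = 0 ≫ f := by
    rw [zero_comp, ← (shiftFunctor 𝒯 n).map_eq_zero_iff, Functor.map_comp, hg,
      Category.assoc, hψ, comp_zero]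
  obtain rfl := hf _ (P.le_shift (-n) _ hX) hgf
  rwa [Functor.map_zero, eq_comm, Preadditive.IsIso.comp_left_eq_zero] at hg

variable [HasZeroObject 𝒯] [Pretriangulated 𝒯]

lemma exists_triangleHom_of_rightOrthogonal {T T' : Triangle 𝒯} (hT : T ∈ distTriang 𝒯)
    (hT₁ : P T.obj₁) (hT' : T' ∈ distTriang 𝒯) (hT'₃ : P.rightOrthogonal T'.obj₃)
    (φ : T.obj₂ ⟶ T'.obj₂) : ∃ u : T ⟶ T', u.hom₂ = φ := by
  obtain ⟨a, ha⟩ := Triangle.coyoneda_exact₂ _ hT' (T.mor₁ ≫ φ) (hT'₃ _ hT₁)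
  obtain ⟨c, hc₂, hc₃⟩ := complete_distinguished_triangle_morphism _ _ hT hT' a φ ha
  exact ⟨⟨a, φ, c, ha, hc₂, hc₃⟩, rfl⟩

variable [P.IsStableUnderShift ℤ]

lemma comp_mor₁_bijective_of_rightOrthogonal {T : Triangle 𝒯} (hT : T ∈ distTriang 𝒯)
    (hT₃ : P.rightOrthogonal T.obj₃) {X : 𝒯} (hX : P X) :
    Function.Bijective (fun β : X ⟶ T.obj₁ => β ≫ T.mor₁) := by
  refine ⟨fun β₁ β₂ hβ => ?_, fun α => ?_⟩
  · have hβ' : (β₁ - β₂) ≫ T.mor₁ = 0 := by rw [Preadditive.sub_comp, sub_eq_zero]; exact hβ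
    obtain ⟨e, he⟩ := Triangle.coyoneda_exact₂ _ (inv_rot_of_distTriang _ hT) _ hβ'
    obtain rfl : e = 0 := P.rightOrthogonal.le_shift (-1) _ hT₃ e hX
    exact sub_eq_zero.mp (he.trans zero_comp)
  · obtain ⟨β, hβ⟩ := Triangle.coyoneda_exact₂ _ hT α (hT₃ _ hX)
    exact ⟨β, hβ.symm⟩

lemma rightOrthogonal_obj₃_of_comp_mor₁_bijective {T : Triangle 𝒯} (hT : T ∈ distTriang 𝒯)
    (hbij : ∀ X, P X → Function.Bijective (fun β : X ⟶ T.obj₁ => β ≫ T.mor₁)) :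
    P.rightOrthogonal T.obj₃ := by
  intro X φ hX
  have hφ : φ ≫ T.mor₃ = 0 :=
    eq_zero_of_comp_shift_map_eq_zero (fun Y hY => (hbij Y hY).1) 1 hX _
      (by rw [Category.assoc, comp_distTriang_mor_zero₃₁ _ hT, comp_zero])
  obtain ⟨α, rfl⟩ := Triangle.coyoneda_exact₃ _ hT φ hφ
  obtain ⟨β, rfl⟩ := (hbij X hX).2 α
  rw [Category.assoc, comp_distTriang_mor_zero₁₂ _ hT, comp_zero]

lemma triangleHom_ext_of_rightOrthogonal {T T' : Triangle 𝒯} (hT : T ∈ distTriang 𝒯)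
    (hT₁ : P T.obj₁) (hT' : T' ∈ distTriang 𝒯) (hT'₃ : P.rightOrthogonal T'.obj₃)
    {u v : T ⟶ T'} (h₂ : u.hom₂ = v.hom₂) : u = v := by
  refine TriangleMorphism.ext ?_ h₂ ?_
  · apply (comp_mor₁_bijective_of_rightOrthogonal hT' hT'₃ hT₁).1
    simp only [← u.comm₁, ← v.comm₁, h₂]
  · have h : T.mor₂ ≫ (u.hom₃ - v.hom₃) = 0 := by
      rw [Preadditive.comp_sub, u.comm₂, v.comm₂, h₂, sub_self]
    obtain ⟨w, hw⟩ := Triangle.yoneda_exact₃ _ hT _ h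
    obtain rfl : w = 0 := hT'₃ w (P.le_shift 1 _ hT₁)
    exact sub_eq_zero.mp (hw.trans comp_zero)

lemma existsUnique_triangleHom_of_rightOrthogonal {T T' : Triangle 𝒯} (hT : T ∈ distTriang 𝒯)
    (hT₁ : P T.obj₁) (hT' : T' ∈ distTriang 𝒯) (hT'₃ : P.rightOrthogonal T'.obj₃)
    (φ : T.obj₂ ⟶ T'.obj₂) : ∃! u : T ⟶ T', u.hom₂ = φ := by
  obtain ⟨u, hu⟩ := exists_triangleHom_of_rightOrthogonal hT hT₁ hT' hT'₃ φ
  exact ⟨u, hu, fun v hv => triangleHom_ext_of_rightOrthogonal hT hT₁ hT' hT'₃ (hv.trans hu.symm)⟩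

lemma exists_triangle_iso_of_rightOrthogonal {T T' : Triangle 𝒯} (hT : T ∈ distTriang 𝒯)
    (hT₁ : P T.obj₁) (hT₃ : P.rightOrthogonal T.obj₃) (hT' : T' ∈ distTriang 𝒯)
    (hT'₁ : P T'.obj₁) (hT'₃ : P.rightOrthogonal T'.obj₃) (φ : T.obj₂ ≅ T'.obj₂) :
    ∃ e : T ≅ T', e.hom.hom₂ = φ.hom := by
  obtain ⟨u, hu⟩ := exists_triangleHom_of_rightOrthogonal hT hT₁ hT' hT'₃ φ.hom
  obtain ⟨v, hv⟩ := exists_triangleHom_of_rightOrthogonal hT' hT'₁ hT hT₃ φ.inv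
  refine ⟨⟨u, v, ?_, ?_⟩, hu⟩
  · exact triangleHom_ext_of_rightOrthogonal hT hT₁ hT hT₃ (by simp [hu, hv])
  · exact triangleHom_ext_of_rightOrthogonal hT' hT'₁ hT' hT'₃ (by simp [hu, hv])

lemma ι_rightAdjointObjIsDefined_iff (A : 𝒯) :
    P.ι.rightAdjointObjIsDefined A ↔ ∃ (A' : 𝒯) (_ : P A') (f : A' ⟶ A) (C : 𝒯) (g : A ⟶ C)
      (h : C ⟶ A'⟦(1 : ℤ)⟧), Triangle.mk f g h ∈ distTriang 𝒯 ∧ P.rightOrthogonal C := by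
  constructor
  · rintro ⟨Y, ⟨e⟩⟩
    let f : Y.obj ⟶ A := e.homEquiv (𝟙 Y)
    obtain ⟨C, g, h, hT⟩ := distinguished_cocone_triangle f
    refine ⟨Y.obj, Y.property, f, C, g, h, hT, rightOrthogonal_obj₃_of_comp_mor₁_bijective hT ?_⟩
    intro X hX
    have he : (fun β : X ⟶ Y.obj => β ≫ f) = e.homEquiv ∘ homMk (X := ⟨X, hX⟩) :=
      funext fun β => by simpa using (e.homEquiv_comp (homMk (X := ⟨X, hX⟩) β) (𝟙 Y)).symm
    change Function.Bijective (fun β : X ⟶ Y.obj => β ≫ f)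
    rw [he]
    exact e.homEquiv.bijective.comp ⟨fun _ _ h => congrArg (·.hom) h, homMk_surjective⟩
  · rintro ⟨A', hA', f, C, g, h, hT, hC⟩
    have hbij (X : P.FullSubcategory) : Function.Bijective (fun β : X ⟶ ⟨A', hA'⟩ => β.hom ≫ f) :=
      (comp_mor₁_bijective_of_rightOrthogonal hT hC X.property).comp
        P.fullyFaithfulι.homEquiv.bijective
    exact ⟨⟨A', hA'⟩, ⟨⟨Equiv.ofBijective _ (hbij _), fun _ _ => by simp⟩⟩⟩

lemma isLeftAdjoint_ι_iff : P.ι.IsLeftAdjoint ↔ ∀ A : 𝒯, ∃ (A' : 𝒯) (_ : P A') (f : A' ⟶ A)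
    (C : 𝒯) (g : A ⟶ C) (h : C ⟶ A'⟦(1 : ℤ)⟧),
      Triangle.mk f g h ∈ distTriang 𝒯 ∧ P.rightOrthogonal C := by
  simp only [Functor.isLeftAdjoint_iff_rightAdjointObjIsDefined_eq_top, eq_top_iff,
    ← ι_rightAdjointObjIsDefined_iff]
  exact ⟨fun h A => h A trivial, fun h A _ => h A⟩

end CategoryTheory.ObjectProperty

/-- Proposition D.5.1 (Verdier): the inclusion `i` of a thick subcategory `𝒯'` (given by a
predicate `P` closed under isomorphisms, shifts, cones and direct summands, and containing
a zero object) admits a right adjoint iff every object `A` receives a morphism `f : A' ⟶ A`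
with `P A'` whose cone `C` satisfies `Hom(X, C) = 0` for all `X` with `P X`; moreover in
that case every `A` sits in a distinguished triangle `A₁ → A → A₂ → A₁[1]` with `P A₁` and
`Hom(X, A₂) = 0` for `X` in `𝒯'`, unique up to isomorphism and functorial in `A`. -/
theorem stmt_19 {𝒯 : Type*} [Category 𝒯] [HasZeroObject 𝒯] [Preadditive 𝒯]
    [HasShift 𝒯 ℤ] [∀ n : ℤ, (CategoryTheory.shiftFunctor 𝒯 n).Additive]
    [Pretriangulated 𝒯]
    (P : 𝒯 → Prop)
    (hzero : ∃ Z : 𝒯, IsZero Z ∧ P Z)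
    (hiso : ∀ (X Y : 𝒯), (X ≅ Y) → P X → P Y)
    (hshift : ∀ (X : 𝒯) (n : ℤ), P X → P (X⟦n⟧))
    (hext : ∀ T : Triangle 𝒯, T ∈ (distTriang 𝒯) → P T.obj₁ → P T.obj₂ → P T.obj₃)
    (hsummand : ∀ (X Y : 𝒯) (s : X ⟶ Y) (r : Y ⟶ X), s ≫ r = 𝟙 X → P Y → P X) :
    ((∃ p : 𝒯 ⥤ ObjectProperty.FullSubcategory P, Nonempty (ObjectProperty.ι P ⊣ p)) ↔
      (∀ A : 𝒯, ∃ (A' : 𝒯) (_ : P A') (f : A' ⟶ A) (C : 𝒯) (g : A ⟶ C)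
          (h : C ⟶ A'⟦(1 : ℤ)⟧),
        Triangle.mk f g h ∈ (distTriang 𝒯) ∧
        ∀ X : 𝒯, P X → ∀ φ : X ⟶ C, φ = 0)) ∧
    ((∃ p : 𝒯 ⥤ ObjectProperty.FullSubcategory P, Nonempty (ObjectProperty.ι P ⊣ p)) →
      (∀ A : 𝒯, ∃ (A₁ A₂ : 𝒯) (f : A₁ ⟶ A) (g : A ⟶ A₂) (h : A₂ ⟶ A₁⟦(1 : ℤ)⟧),
        (Triangle.mk f g h ∈ (distTriang 𝒯) ∧ P A₁ ∧
          ∀ X : 𝒯, P X → ∀ φ : X ⟶ A₂, φ = 0) ∧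
        (∀ (B₁ B₂ : 𝒯) (f' : B₁ ⟶ A) (g' : A ⟶ B₂) (h' : B₂ ⟶ B₁⟦(1 : ℤ)⟧),
          Triangle.mk f' g' h' ∈ (distTriang 𝒯) → P B₁ →
          (∀ X : 𝒯, P X → ∀ φ : X ⟶ B₂, φ = 0) →
          ∃ e : Triangle.mk f g h ≅ Triangle.mk f' g' h', e.hom.hom₂ = 𝟙 A)) ∧
      (∀ (A B : 𝒯) (φ : A ⟶ B)
          (A₁ A₂ : 𝒯) (f : A₁ ⟶ A) (g : A ⟶ A₂) (h : A₂ ⟶ A₁⟦(1 : ℤ)⟧)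
          (B₁ B₂ : 𝒯) (f' : B₁ ⟶ B) (g' : B ⟶ B₂) (h' : B₂ ⟶ B₁⟦(1 : ℤ)⟧),
        Triangle.mk f g h ∈ (distTriang 𝒯) → P A₁ →
        (∀ X : 𝒯, P X → ∀ ψ : X ⟶ A₂, ψ = 0) →
        Triangle.mk f' g' h' ∈ (distTriang 𝒯) → P B₁ →
        (∀ X : 𝒯, P X → ∀ ψ : X ⟶ B₂, ψ = 0) →
        ∃! u : Triangle.mk f g h ⟶ Triangle.mk f' g' h', u.hom₂ = φ)) := by
  have : ObjectProperty.IsStableUnderShift P ℤ := ⟨fun n => ⟨fun X hX => hshift X n hX⟩⟩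
  simp_rw [← ObjectProperty.rightOrthogonal_iff_forall P]
  have hadj_iff : (∃ p, Nonempty (ObjectProperty.ι P ⊣ p)) ↔ (ObjectProperty.ι P).IsLeftAdjoint :=
    ⟨fun h => ⟨h⟩, fun h => h.1⟩
  rw [hadj_iff, ObjectProperty.isLeftAdjoint_ι_iff]
  refine ⟨Iff.rfl, fun hadj => ⟨fun A => ?_, ?_⟩⟩
  · obtain ⟨A₁, hA₁, f, A₂, g, h, hT, hA₂⟩ := hadj A
    exact ⟨A₁, A₂, f, g, h, ⟨hT, hA₁, hA₂⟩, fun B₁ B₂ f' g' h' hT' hB₁ hB₂ =>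
      ObjectProperty.exists_triangle_iso_of_rightOrthogonal hT hA₁ hA₂ hT' hB₁ hB₂ (Iso.refl A)⟩
  · intro A B φ A₁ A₂ f g h B₁ B₂ f' g' h' hT hA₁ _ hT' _ hB₂
    exact ObjectProperty.existsUnique_triangleHom_of_rightOrthogonal hT hA₁ hT' hB₂ φ
end
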